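/- Let C > 0, R > 0, T0 ≥ 0 and v_src be a constant source voltage. Suppose v2 : ℝ → ℝ is differentiable and satisfies C·v2'(t) = (v_src - v2(t))/R for all t. Then the Joule-heat loss, ΔE_loss := ∫₀^{T0} ((v_src - v2(t))²/R) dt, equals (1/2)·C·(v_src - v2(0))²·(1 - exp(-2·T0/(C·R))). -/

import Mathlib

/-! The voltage gap `u = v_src - v₂` obeys the linear ODE `u' = -u / (C R)`, so it decays as
`u 0 · exp (-t / (C R))`; the Joule heat `∫ u² / R` is then the integral of an exponential. -/

open Real

theorem eq_mul_exp_of_deriv_eq_mul {f : ℝ → ℝ} {c : ℝ} (hf : Differentiable ℝ f)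
    (hderiv : ∀ t, deriv f t = c * f t) (t : ℝ) : f t = f 0 * exp (c * t) := by
  set g : ℝ → ℝ := fun s => f s * exp (-(c * s))
  have hg_deriv : ∀ s, HasDerivAt g 0 s := by
    intro s
    have hexp : HasDerivAt (fun s => exp (-(c * s))) (exp (-(c * s)) * -c) s := by
      simpa using ((hasDerivAt_id s).const_mul c).neg.exp
    exact ((hf s).hasDerivAt.mul hexp).congr_deriv (by rw [hderiv s]; ring)
  have hg_const : g t = g 0 :=
    is_const_of_deriv_eq_zero (fun s => (hg_deriv s).differentiableAt)
      (fun s => (hg_deriv s).deriv) t 0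
  simp only [g, mul_zero, neg_zero, exp_zero, mul_one] at hg_const
  rw [← hg_const, mul_assoc, ← exp_add, neg_add_cancel, exp_zero, mul_one]

theorem integral_exp_const_mul {c : ℝ} (hc : c ≠ 0) (a b : ℝ) :
    ∫ x in a..b, exp (c * x) = (exp (c * b) - exp (c * a)) / c := by
  rw [intervalIntegral.integral_comp_mul_left exp hc, integral_exp, smul_eq_mul, inv_mul_eq_div]

theorem source_router_energy_loss_general
    (C R T0 vsrc : ℝ) (hC : 0 < C) (hR : 0 < R)
    (v2 : ℝ → ℝ) (hd2 : Differentiable ℝ v2)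
    (h2 : ∀ t, C * deriv v2 t = (vsrc - v2 t) / R) :
    (∫ t in (0:ℝ)..T0, (vsrc - v2 t)^2 / R) =
      (1/2) * C * (vsrc - v2 0)^2 * (1 - Real.exp (-2 * T0 / (C * R))) := by
  set u : ℝ → ℝ := fun t => vsrc - v2 t
  have hu_deriv : ∀ t, deriv u t = -(C * R)⁻¹ * u t := by
    intro t
    have hRC : (C * R)⁻¹ * (vsrc - v2 t) = deriv v2 t := by
      rw [mul_inv, mul_assoc, ← div_eq_inv_mul _ R, ← h2 t, inv_mul_cancel_left₀ hC.ne']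
    rw [deriv_const_sub, neg_mul, hRC]
  have hu : ∀ t, u t = u 0 * exp (-(C * R)⁻¹ * t) :=
    eq_mul_exp_of_deriv_eq_mul (differentiable_const vsrc |>.sub hd2) hu_deriv
  have hintegrand : ∀ t, u t ^ 2 / R = u 0 ^ 2 / R * exp (-2 * (C * R)⁻¹ * t) := by
    intro t
    rw [hu t, mul_pow, sq (exp _), ← exp_add]
    ring_nf
  have hrate : -2 * (C * R)⁻¹ ≠ 0 := by positivity
  rw [intervalIntegral.integral_congr (fun t _ => hintegrand t), intervalIntegral.integral_const_mul,
    integral_exp_const_mul hrate]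
  simp only [u, mul_zero, exp_zero]
  field_simp
  ring

theorem source_router_energy_loss
    (C R T0 vsrc : ℝ) (hC : 0 < C) (hR : 0 < R) (hT0 : 0 ≤ T0)
    (v2 : ℝ → ℝ) (hd2 : Differentiable ℝ v2)
    (h2 : ∀ t, C * deriv v2 t = (vsrc - v2 t) / R) :
    (∫ t in (0:ℝ)..T0, (vsrc - v2 t)^2 / R) =
      (1/2) * C * (vsrc - v2 0)^2 * (1 - Real.exp (-2 * T0 / (C * R))) :=
  source_router_energy_loss_general C R T0 vsrc hC hR v2 hd2 h2
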